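/- For s > 2 and digits c_1,…,c_n ∈ {1,…,s-1}, the diameter of the cylinder Δ'_{c_1…c_n} (i.e., sup minus inf) equals (s^{s-1} − 1 − (s−1)^2) / ((s−1)(s^{s-1}−1) s^{c_1+⋯+c_n}). -/

import Mathlib

open Finset

/-- The term of the series: `c n / s ^ (c 1 + ... + c (n+1))` (0-indexed). -/
noncomputable def sTerm (s : ℕ) (c : ℕ → ℕ) (n : ℕ) : ℝ :=
  (c n : ℝ) / (s : ℝ) ^ (∑ k ∈ Finset.range (n + 1), c k)

/-- `x = Σ_{k=1}^∞ c_k / s^{c_1+⋯+c_k}`. -/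
noncomputable def sVal (s : ℕ) (c : ℕ → ℕ) : ℝ := ∑' n : ℕ, sTerm s c n

/-- The sequence `(c_k)` has all terms in `{1, ..., s-1}`. -/
def sValid (s : ℕ) (c : ℕ → ℕ) : Prop := ∀ k, 1 ≤ c k ∧ c k ≤ s - 1

/-- The set `S_{(s,0)}`. -/
def Sset (s : ℕ) : Set ℝ := { x | ∃ c : ℕ → ℕ, sValid s c ∧ x = sVal s c }

/-- The cylinder `Δ'_{c_1 ... c_n}` of rank `n` with base the first `n` terms of `c`. -/
def cyl (s n : ℕ) (c : ℕ → ℕ) : Set ℝ :=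
  { x | ∃ c' : ℕ → ℕ, sValid s c' ∧ (∀ k < n, c' k = c k) ∧ x = sVal s c' }

/-- The cylinder `Δ'_{c_1 ... c_n p}`: prefix of length `n` from `c`, next digit `p`. -/
def cylExt (s n : ℕ) (c : ℕ → ℕ) (p : ℕ) : Set ℝ :=
  { x | ∃ c' : ℕ → ℕ, sValid s c' ∧ (∀ k < n, c' k = c k) ∧ c' n = p ∧ x = sVal s c' }

/-- `g_n = Σ_{k=1}^n c_k / s^{c_1+⋯+c_k}`. -/
noncomputable def gPart (s n : ℕ) (c : ℕ → ℕ) : ℝ := ∑ k ∈ Finset.range n, sTerm s c k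


/-!
Write `E_k = c_0 + ⋯ + c_{k-1}` and `T_k = s^{-E_k}` (`prefixScale`). The `k`-th term `c_k T_{k+1}`
equals `c_k / (s^{c_k} - 1)` times the telescoping difference `T_k - T_{k+1}`, and since
`(s^d - 1) / d` increases with `d`, this ratio lies between its values at `d = s - 1` and `d = 1`.
As `Σ (T_k - T_{k+1}) = 1`, every value lies in `[m, M]` with `m = (s-1)/(s^{s-1}-1)` and
`M = 1/(s-1)`, the values of the constant digit sequences `s - 1` and `1`. A cylinder of rank `n` is
the image of the set `Sset s` of all values under the increasing affine map `x ↦ g_n + T_n x`, so its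
diameter is `T_n (M - m)`.
-/

open Finset Filter Topology

lemma natCast_mul_pow_sub_one_le {σ : ℝ} (hσ : 1 ≤ σ) {d e : ℕ} (hde : d ≤ e) :
    (e : ℝ) * (σ ^ d - 1) ≤ d * (σ ^ e - 1) := by
  induction e, hde using Nat.le_induction with
  | base => exact le_rfl
  | succ e hde ih =>
    have hgeom : σ ^ d - 1 ≤ d * σ ^ e * (σ - 1) := by
      rw [← geom_sum_mul]
      refine mul_le_mul_of_nonneg_right ?_ (by linarith)
      calc ∑ i ∈ range d, σ ^ i ≤ ∑ _i ∈ range d, σ ^ e :=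
            sum_le_sum fun i hi => pow_le_pow_right₀ hσ (by rw [mem_range] at hi; omega)
        _ = d * σ ^ e := by simp
    push_cast
    rw [pow_succ]
    linear_combination ih + hgeom

section

variable {s : ℕ} {c c' : ℕ → ℕ}

lemma sValid.one_lt (hc : sValid s c) : 1 < s := by
  have := hc 0
  omega

noncomputable def prefixScale (s : ℕ) (c : ℕ → ℕ) (k : ℕ) : ℝ :=
  ((s : ℝ) ^ ∑ j ∈ range k, c j)⁻¹

lemma prefixScale_zero : prefixScale s c 0 = 1 := by
  simp [prefixScale]

lemma prefixScale_pos (hs : 0 < s) (k : ℕ) : 0 < prefixScale s c k := by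
  unfold prefixScale
  positivity

lemma prefixScale_add (n m : ℕ) :
    prefixScale s c (n + m) = prefixScale s c n * prefixScale s (fun k => c (n + k)) m := by
  simp only [prefixScale, sum_range_add, pow_add, mul_inv]

lemma prefixScale_succ (k : ℕ) : prefixScale s c (k + 1) = prefixScale s c k * ((s : ℝ) ^ c k)⁻¹ := by
  simp only [prefixScale, sum_range_succ, pow_add, mul_inv]

lemma prefixScale_succ_le (hs : 1 ≤ s) (k : ℕ) : prefixScale s c (k + 1) ≤ prefixScale s c k := by
  rw [prefixScale_succ]
  exact mul_le_of_le_one_right (prefixScale_pos hs k).le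
    (inv_le_one_of_one_le₀ (one_le_pow₀ (by exact_mod_cast hs)))

lemma prefixScale_sub_succ (hs : s ≠ 0) (k : ℕ) :
    prefixScale s c k - prefixScale s c (k + 1) = prefixScale s c (k + 1) * ((s : ℝ) ^ c k - 1) := by
  have : (s : ℝ) ^ c k ≠ 0 := by positivity
  rw [prefixScale_succ]
  field_simp

lemma prefixScale_congr {n : ℕ} (h : ∀ k < n, c' k = c k) : prefixScale s c' n = prefixScale s c n := by
  rw [prefixScale, prefixScale, sum_congr rfl fun k hk => h k (mem_range.1 hk)]

lemma tendsto_prefixScale (hc : sValid s c) : Tendsto (prefixScale s c) atTop (𝓝 0) := by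
  have hs : (1 : ℝ) < s := by exact_mod_cast hc.one_lt
  have hle (k : ℕ) : prefixScale s c k ≤ ((s : ℝ)⁻¹) ^ k := by
    rw [prefixScale, ← inv_pow]
    refine pow_le_pow_of_le_one (by positivity) (inv_le_one_of_one_le₀ hs.le) ?_
    simpa using card_nsmul_le_sum (range k) c 1 fun j _ => (hc j).1
  exact squeeze_zero (fun k => (prefixScale_pos (Nat.zero_lt_of_lt hc.one_lt) k).le) hle
    (tendsto_pow_atTop_nhds_zero_of_lt_one (by positivity) (inv_lt_one_of_one_lt₀ hs))

lemma hasSum_prefixScale_sub (hc : sValid s c) :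
    HasSum (fun k => prefixScale s c k - prefixScale s c (k + 1)) 1 := by
  rw [hasSum_iff_tendsto_nat_of_nonneg fun k => sub_nonneg.2 (prefixScale_succ_le hc.one_lt.le k)]
  simp only [sum_range_sub', prefixScale_zero]
  simpa using (tendsto_prefixScale hc).const_sub 1

lemma sTerm_eq_mul_prefixScale (k : ℕ) : sTerm s c k = c k * prefixScale s c (k + 1) := by
  simp [sTerm, prefixScale, div_eq_mul_inv]

lemma sTerm_add (n i : ℕ) :
    sTerm s c (n + i) = prefixScale s c n * sTerm s (fun k => c (n + k)) i := by
  rw [sTerm_eq_mul_prefixScale, sTerm_eq_mul_prefixScale, add_assoc, prefixScale_add]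
  ring

lemma gPart_congr {n : ℕ} (h : ∀ k < n, c' k = c k) : gPart s n c' = gPart s n c := by
  refine sum_congr rfl fun k hk => ?_
  rw [mem_range] at hk
  rw [sTerm_eq_mul_prefixScale, sTerm_eq_mul_prefixScale, h k hk,
    prefixScale_congr fun j hj => h j (by omega)]

lemma sTerm_le_mul_prefixScale_sub (hs : 1 < s) (k : ℕ) :
    sTerm s c k ≤ ((s : ℝ) - 1)⁻¹ * (prefixScale s c k - prefixScale s c (k + 1)) := by
  have hs' : (1 : ℝ) < s := by exact_mod_cast hs
  have hbernoulli : (c k : ℝ) ≤ ((s : ℝ) - 1)⁻¹ * ((s : ℝ) ^ c k - 1) := by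
    have := one_add_mul_le_pow (a := (s : ℝ) - 1) (by linarith) (c k)
    rw [add_sub_cancel] at this
    rw [← div_eq_inv_mul, le_div_iff₀ (by linarith)]
    linarith
  rw [sTerm_eq_mul_prefixScale, prefixScale_sub_succ (by omega)]
  calc (c k : ℝ) * prefixScale s c (k + 1)
      ≤ ((s : ℝ) - 1)⁻¹ * ((s : ℝ) ^ c k - 1) * prefixScale s c (k + 1) :=
        mul_le_mul_of_nonneg_right hbernoulli (prefixScale_pos (by omega) _).le
    _ = _ := by ring

lemma mul_prefixScale_sub_le_sTerm (hs : 1 < s) {k : ℕ} (hck : c k ≤ s - 1) :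
    ((s : ℝ) - 1) / ((s : ℝ) ^ (s - 1) - 1) * (prefixScale s c k - prefixScale s c (k + 1))
      ≤ sTerm s c k := by
  have hs' : (1 : ℝ) < s := by exact_mod_cast hs
  have hpow : (1 : ℝ) < (s : ℝ) ^ (s - 1) := one_lt_pow₀ hs' (by omega)
  have hcross : ((s : ℝ) - 1) / ((s : ℝ) ^ (s - 1) - 1) * ((s : ℝ) ^ c k - 1) ≤ c k := by
    rw [div_mul_eq_mul_div, div_le_iff₀ (by linarith)]
    simpa [Nat.cast_sub hs.le] using natCast_mul_pow_sub_one_le hs'.le hck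
  rw [sTerm_eq_mul_prefixScale, prefixScale_sub_succ (by omega)]
  calc ((s : ℝ) - 1) / ((s : ℝ) ^ (s - 1) - 1) * (prefixScale s c (k + 1) * ((s : ℝ) ^ c k - 1))
      = ((s : ℝ) - 1) / ((s : ℝ) ^ (s - 1) - 1) * ((s : ℝ) ^ c k - 1) * prefixScale s c (k + 1) := by
        ring
    _ ≤ c k * prefixScale s c (k + 1) :=
        mul_le_mul_of_nonneg_right hcross (prefixScale_pos (by omega) _).le

lemma summable_sTerm (hc : sValid s c) : Summable (sTerm s c) :=
  Summable.of_nonneg_of_le (fun k => by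
    rw [sTerm_eq_mul_prefixScale]
    exact mul_nonneg (c k).cast_nonneg (prefixScale_pos (Nat.zero_lt_of_lt hc.one_lt) _).le)
    (sTerm_le_mul_prefixScale_sub hc.one_lt) ((hasSum_prefixScale_sub hc).mul_left _).summable

lemma sVal_le (hc : sValid s c) : sVal s c ≤ ((s : ℝ) - 1)⁻¹ := by
  rw [sVal]
  simpa using hasSum_le (sTerm_le_mul_prefixScale_sub hc.one_lt) (summable_sTerm hc).hasSum
    ((hasSum_prefixScale_sub hc).mul_left _)

lemma le_sVal (hc : sValid s c) : ((s : ℝ) - 1) / ((s : ℝ) ^ (s - 1) - 1) ≤ sVal s c := by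
  rw [sVal]
  simpa using hasSum_le (fun k => mul_prefixScale_sub_le_sTerm hc.one_lt (hc k).2)
    ((hasSum_prefixScale_sub hc).mul_left _) (summable_sTerm hc).hasSum

lemma sVal_const (hs : 1 < s) {d : ℕ} (hd : 1 ≤ d) :
    sVal s (fun _ => d) = d / ((s : ℝ) ^ d - 1) := by
  have hpow : (1 : ℝ) < (s : ℝ) ^ d := one_lt_pow₀ (by exact_mod_cast hs) (by omega)
  set r : ℝ := ((s : ℝ) ^ d)⁻¹
  have hterm (k : ℕ) : sTerm s (fun _ => d) k = d * r * r ^ k := by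
    simp only [sTerm, sum_const, card_range, smul_eq_mul, pow_mul, pow_succ, div_eq_mul_inv, inv_pow, r]
    ring
  rw [sVal, tsum_congr hterm, tsum_mul_left, tsum_geometric_of_lt_one (by positivity)
    (inv_lt_one_of_one_lt₀ hpow)]
  have : (s : ℝ) ^ d - 1 ≠ 0 := by linarith
  simp only [r]
  field_simp

lemma sVal_eq_gPart_add (hc : sValid s c) (n : ℕ) :
    sVal s c = gPart s n c + prefixScale s c n * sVal s (fun k => c (n + k)) := by
  rw [sVal, sVal, ← (summable_sTerm hc).sum_add_tsum_nat_add n, ← tsum_mul_left, gPart]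
  simp only [add_comm _ n, sTerm_add]

lemma isGreatest_Sset (hs : 1 < s) : IsGreatest (Sset s) ((s : ℝ) - 1)⁻¹ := by
  refine ⟨⟨fun _ => 1, fun _ => ⟨le_rfl, Nat.le_sub_one_of_lt hs⟩, ?_⟩, ?_⟩
  · rw [sVal_const hs le_rfl]
    simp
  · rintro _ ⟨c, hc, rfl⟩
    exact sVal_le hc

lemma isLeast_Sset (hs : 1 < s) :
    IsLeast (Sset s) (((s : ℝ) - 1) / ((s : ℝ) ^ (s - 1) - 1)) := by
  refine ⟨⟨fun _ => s - 1, fun _ => ⟨Nat.le_sub_one_of_lt hs, le_rfl⟩, ?_⟩, ?_⟩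
  · rw [sVal_const hs (Nat.le_sub_one_of_lt hs), Nat.cast_sub hs.le, Nat.cast_one]
  · rintro _ ⟨c, hc, rfl⟩
    exact le_sVal hc

lemma cyl_eq_image {n : ℕ} (hc : ∀ k < n, 1 ≤ c k ∧ c k ≤ s - 1) :
    cyl s n c = (fun x => gPart s n c + prefixScale s c n * x) '' Sset s := by
  ext x
  constructor
  · rintro ⟨c', hc', hpre, rfl⟩
    refine ⟨_, ⟨fun k => c' (n + k), fun k => hc' (n + k), rfl⟩, ?_⟩
    rw [sVal_eq_gPart_add hc' n, gPart_congr hpre, prefixScale_congr hpre]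
  · rintro ⟨_, ⟨d, hd, rfl⟩, rfl⟩
    let c' : ℕ → ℕ := fun k => if k < n then c k else d (k - n)
    have hpre : ∀ k < n, c' k = c k := fun k hk => if_pos hk
    have hc' : sValid s c' := fun k => by
      by_cases hk : k < n
      · simpa [c', hk] using hc k hk
      · simpa [c', hk] using hd (k - n)
    refine ⟨c', hc', hpre, ?_⟩
    rw [sVal_eq_gPart_add hc' n, gPart_congr hpre, prefixScale_congr hpre]
    simp [c']

end

theorem stmt5 (s n : ℕ) (hs : 2 < s) (c : ℕ → ℕ) (hc : ∀ k < n, 1 ≤ c k ∧ c k ≤ s - 1) :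
    sSup (cyl s n c) - sInf (cyl s n c) =
      ((s : ℝ) ^ (s - 1) - 1 - ((s : ℝ) - 1) ^ 2) /
        (((s : ℝ) - 1) * ((s : ℝ) ^ (s - 1) - 1) * (s : ℝ) ^ (∑ k ∈ Finset.range n, c k)) := by
  have hs1 : 1 < s := by omega
  have hmono : Monotone fun x => gPart s n c + prefixScale s c n * x :=
    (monotone_id.const_mul (prefixScale_pos (by omega) n).le).const_add _
  rw [cyl_eq_image hc, (hmono.map_isGreatest (isGreatest_Sset hs1)).csSup_eq,
    (hmono.map_isLeast (isLeast_Sset hs1)).csInf_eq]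
  have hs' : (1 : ℝ) < s := by exact_mod_cast hs1
  have hpow : (1 : ℝ) < (s : ℝ) ^ (s - 1) := one_lt_pow₀ hs' (by omega)
  have hs0 : (s : ℝ) - 1 ≠ 0 := by linarith
  have hpow0 : (s : ℝ) ^ (s - 1) - 1 ≠ 0 := by linarith
  simp only [prefixScale]
  field_simp
  ring
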